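/- arXiv:1712.08186 — 2 statements merged into one kernel-verified Lean document; each statement's English description precedes it below -/
import Mathlib

section
/- Let $0<\gamma<n$, $1\le p<n/\gamma$, $1/q=1/p-\gamma/n$ and $s=1+q/p'$. Then for every nonnegative measurable function $w$ on $\mathbb{R}^n$ and every nonnegative $f\in L^p(\mathbb{R}^n)$, the pointwise estimate $M_\gamma(fw^{-1})(x)\le M(f^{p/s}w^{-q/s})(x)^{s/q}\left(\int_{\mathbb{R}^n}f(y)^p\,dy\right)^{\gamma/n}$ holds for every $x\in\mathbb{R}^n$. -/
open MeasureTheory ENNReal NNReal Filter Topology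

noncomputable section

variable {n : ℕ}

/-- The axis-parallel cube with corner `a` and side length `h`. -/
def Cube (a : EuclideanSpace ℝ (Fin n)) (h : ℝ) : Set (EuclideanSpace ℝ (Fin n)) :=
  {y | ∀ i, a i ≤ y i ∧ y i ≤ a i + h}

/-- The fractional maximal operator `M_γ`; for `γ = 0` this is the Hardy–Littlewood
maximal operator `M`. -/
def fracMaximal (γ : ℝ) (f : EuclideanSpace ℝ (Fin n) → ℝ≥0∞)
    (x : EuclideanSpace ℝ (Fin n)) : ℝ≥0∞ :=
  ⨆ (a : EuclideanSpace ℝ (Fin n)) (h : ℝ) (_ : 0 < h) (_ : x ∈ Cube a h),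
    volume (Cube a h) ^ (γ / n - 1) * ∫⁻ y in Cube a h, f y

/-- The fractional integral operator `I_γ`. -/
def fracIntegral (γ : ℝ) (f : EuclideanSpace ℝ (Fin n) → ℝ≥0∞)
    (x : EuclideanSpace ℝ (Fin n)) : ℝ≥0∞ :=
  ∫⁻ y, f y * (‖x - y‖₊ : ℝ≥0∞) ^ (γ - (n : ℝ))

/-- A weight: measurable, positive and finite a.e., locally integrable. -/
def IsWeight (w : EuclideanSpace ℝ (Fin n) → ℝ≥0∞) : Prop :=
  Measurable w ∧ (∀ᵐ x ∂(volume : Measure (EuclideanSpace ℝ (Fin n))), 0 < w x ∧ w x < ∞) ∧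
    ∀ (a : EuclideanSpace ℝ (Fin n)) (h : ℝ), 0 < h → ∫⁻ y in Cube a h, w y < ∞

/-- The Muckenhoupt `A₁` condition with constant `C`. -/
def IsA1 (w : EuclideanSpace ℝ (Fin n) → ℝ≥0∞) (C : ℝ≥0) : Prop :=
  ∀ (a : EuclideanSpace ℝ (Fin n)) (h : ℝ), 0 < h →
    ∫⁻ y in Cube a h, w y ≤ C * volume (Cube a h) * essInf w (volume.restrict (Cube a h))

/-- The reverse Hölder `RH_∞` condition with constant `C`. -/
def IsRHinf (w : EuclideanSpace ℝ (Fin n) → ℝ≥0∞) (C : ℝ≥0) : Prop :=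
  ∀ (a : EuclideanSpace ℝ (Fin n)) (h : ℝ), 0 < h →
    essSup w (volume.restrict (Cube a h)) * volume (Cube a h) ≤ C * ∫⁻ y in Cube a h, w y

/-- The Muckenhoupt `A_p` condition (`1 < p`) with constant `C`. -/
def IsAp (p : ℝ) (w : EuclideanSpace ℝ (Fin n) → ℝ≥0∞) (C : ℝ≥0) : Prop :=
  ∀ (a : EuclideanSpace ℝ (Fin n)) (h : ℝ), 0 < h →
    (∫⁻ y in Cube a h, w y) * (∫⁻ y in Cube a h, w y ^ (-(1 / (p - 1)))) ^ (p - 1)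
      ≤ C * volume (Cube a h) ^ p

/-- `A_∞ = ⋃_p A_p`. -/
def IsAinf (w : EuclideanSpace ℝ (Fin n) → ℝ≥0∞) : Prop :=
  ∃ (p : ℝ) (C : ℝ≥0), 1 < p ∧ IsAp p w C

/-- The `A_r(u)` condition: Muckenhoupt `A_r` with respect to the measure `u dx`. -/
def IsApWrt (u : EuclideanSpace ℝ (Fin n) → ℝ≥0∞) (r : ℝ)
    (v : EuclideanSpace ℝ (Fin n) → ℝ≥0∞) (C : ℝ≥0) : Prop :=
  ∀ (a : EuclideanSpace ℝ (Fin n)) (h : ℝ), 0 < h →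
    (∫⁻ y in Cube a h, v y * u y) *
      (∫⁻ y in Cube a h, v y ^ (-(1 / (r - 1))) * u y) ^ (r - 1)
      ≤ C * (∫⁻ y in Cube a h, u y) ^ r

/-- `A_∞(u) = ⋃_r A_r(u)`. -/
def IsAinfWrt (u v : EuclideanSpace ℝ (Fin n) → ℝ≥0∞) : Prop :=
  ∃ (r : ℝ) (C : ℝ≥0), 1 < r ∧ IsApWrt u r v C

/-- The weak `L^{q,∞}(w)` quasinorm `sup_t t · w({|g|>t})^{1/q}`. -/
def weakNorm (q : ℝ) (w g : EuclideanSpace ℝ (Fin n) → ℝ≥0∞) : ℝ≥0∞ :=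
  ⨆ t : ℝ≥0, (t : ℝ≥0∞) * (∫⁻ x in {x | (t : ℝ≥0∞) < g x}, w x) ^ (1 / q)

/-!
With `θ = γ / n` and `g = f^{p/s} w^{-q/s}`, the relations between the exponents give `s / q = 1 - θ`
and `f w⁻¹ = g^{1-θ} (f^p)^θ`. Hölder's inequality with the exponents `1 - θ` and `θ` on a cube `Q`
bounds `∫_Q f w⁻¹` by `(∫_Q g)^{1-θ} (∫ f^p)^θ`, and `|Q|^{θ-1} = (|Q|^{-1})^{1-θ}` turns the first
factor into a power of an average of `g`, hence of `M g`.
-/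

theorem fracMaximal_le_rpow_mul_of_forall_cube {γ : ℝ} (hγ : γ / n ≤ 1)
    {F G : EuclideanSpace ℝ (Fin n) → ℝ≥0∞} {C : ℝ≥0∞} {x : EuclideanSpace ℝ (Fin n)}
    (hFG : ∀ a h, 0 < h → x ∈ Cube a h →
      ∫⁻ y in Cube a h, F y ≤ (∫⁻ y in Cube a h, G y) ^ (1 - γ / n) * C) :
    fracMaximal γ F x ≤ fracMaximal 0 G x ^ (1 - γ / n) * C := by
  refine iSup₂_le fun a h => iSup₂_le fun hh hx => ?_
  have hG : volume (Cube a h) ^ ((0 : ℝ) / n - 1) * ∫⁻ y in Cube a h, G y ≤ fracMaximal 0 G x :=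
    le_iSup₂_of_le a h (le_iSup₂_of_le hh hx le_rfl)
  calc volume (Cube a h) ^ (γ / n - 1) * ∫⁻ y in Cube a h, F y
      ≤ volume (Cube a h) ^ (γ / n - 1) * ((∫⁻ y in Cube a h, G y) ^ (1 - γ / n) * C) := by
        gcongr; exact hFG a h hh hx
    _ = (volume (Cube a h) ^ ((0 : ℝ) / n - 1) * ∫⁻ y in Cube a h, G y) ^ (1 - γ / n) * C := by
        rw [ENNReal.mul_rpow_of_nonneg _ _ (sub_nonneg.2 hγ), ← ENNReal.rpow_mul, mul_assoc]
        congr 2; ring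
    _ ≤ fracMaximal 0 G x ^ (1 - γ / n) * C := by gcongr

theorem mul_inv_eq_rpow_mul_rpow (a b : ℝ≥0∞) {p q s θ : ℝ} (hp : 0 < p) (hq : 0 < q)
    (hs : 0 < s) (hθ : 0 ≤ θ) (hpq : 1 / q = 1 / p - θ) (hsq : s / q = 1 - θ) :
    a * b⁻¹ = (a ^ (p / s) * b ^ (-(q / s))) ^ (1 - θ) * (a ^ p) ^ θ := by
  have hexp : p / q + p * θ = 1 := by
    field_simp at hpq ⊢; linarith
  rw [← hsq, ENNReal.mul_rpow_of_nonneg _ _ (by positivity), ← ENNReal.rpow_mul,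
    ← ENNReal.rpow_mul, ← ENNReal.rpow_mul, mul_right_comm,
    show p / s * (s / q) = p / q by field_simp, show -(q / s) * (s / q) = -1 by field_simp,
    ENNReal.rpow_neg_one, ← ENNReal.rpow_add_of_nonneg _ _ (by positivity) (by positivity),
    hexp, ENNReal.rpow_one]

theorem lintegral_mul_inv_le {α : Type*} [MeasurableSpace α] {μ : Measure α}
    {f w : α → ℝ≥0∞} (hf : AEMeasurable f μ) (hw : AEMeasurable w μ) {p q s θ : ℝ}
    (hp : 0 < p) (hq : 0 < q) (hs : 0 < s) (hθ : 0 ≤ θ) (hpq : 1 / q = 1 / p - θ)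
    (hsq : s / q = 1 - θ) :
    ∫⁻ y, f y * (w y)⁻¹ ∂μ
      ≤ (∫⁻ y, f y ^ (p / s) * w y ^ (-(q / s)) ∂μ) ^ (1 - θ) * (∫⁻ y, f y ^ p ∂μ) ^ θ := by
  simp_rw [mul_inv_eq_rpow_mul_rpow _ _ hp hq hs hθ hpq hsq]
  exact ENNReal.lintegral_mul_norm_pow_le ((hf.pow_const _).mul (hw.pow_const _))
    (hf.pow_const _) (hsq ▸ by positivity) hθ (sub_add_cancel 1 θ)

theorem stmt0_general (n : ℕ) (hn : 0 < n) (γ p q s : ℝ)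
    (hγ : 0 < γ) (hp : 1 ≤ p) (hpn : p < n / γ)
    (hq : 1 / q = 1 / p - γ / n) (hs : s = 1 + q * (p - 1) / p)
    (w f : EuclideanSpace ℝ (Fin n) → ℝ≥0∞) (hw : Measurable w) (hf : Measurable f)
    (x : EuclideanSpace ℝ (Fin n)) :
    fracMaximal γ (fun y => f y * (w y)⁻¹) x
      ≤ (fracMaximal 0 (fun y => f y ^ (p / s) * w y ^ (-(q / s))) x) ^ (s / q) *
          (∫⁻ y, f y ^ p) ^ (γ / n) := by
  have hn' : (0 : ℝ) < n := Nat.cast_pos.2 hn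
  have hθ : 0 < γ / n := div_pos hγ hn'
  have hp0 : 0 < p := one_pos.trans_le hp
  have hpθ : p * (γ / n) < 1 := by
    rw [← mul_div_assoc, div_lt_one hn']; exact (lt_div_iff₀ hγ).1 hpn
  have hq0 : 0 < q := by
    rw [← one_div_pos, hq, sub_pos, lt_div_iff₀ hp0, mul_comm]; exact hpθ
  have hs0 : 0 < s := by
    have : 0 ≤ q * (p - 1) / p := div_nonneg (mul_nonneg hq0.le (sub_nonneg.2 hp)) hp0.le
    linarith
  have hsq : s / q = 1 - γ / n := by
    rw [hs]; field_simp at hq ⊢; linarith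
  rw [hsq]
  refine fracMaximal_le_rpow_mul_of_forall_cube (by linarith [div_pos hs0 hq0]) fun a h _ _ => ?_
  calc ∫⁻ y in Cube a h, f y * (w y)⁻¹
      ≤ (∫⁻ y in Cube a h, f y ^ (p / s) * w y ^ (-(q / s))) ^ (1 - γ / n) *
          (∫⁻ y in Cube a h, f y ^ p) ^ (γ / n) :=
        lintegral_mul_inv_le hf.aemeasurable hw.aemeasurable hp0 hq0 hs0 hθ.le hq hsq
    _ ≤ _ := by gcongr; exact Measure.restrict_le_self

/-- pointwise bound of `M_γ(f w⁻¹)` by the Hardy–Littlewood maximal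
function of `f^{p/s} w^{-q/s}`, where `s = 1 + q/p'`. -/
theorem stmt0 (n : ℕ) (hn : 0 < n) (γ p q s : ℝ)
    (hγ : 0 < γ) (hγn : γ < n) (hp : 1 ≤ p) (hpn : p < n / γ)
    (hq : 1 / q = 1 / p - γ / n) (hs : s = 1 + q * (p - 1) / p)
    (w f : EuclideanSpace ℝ (Fin n) → ℝ≥0∞) (hw : Measurable w) (hf : Measurable f)
    (hfLp : ∫⁻ y, f y ^ p < ∞) (x : EuclideanSpace ℝ (Fin n)) :
    fracMaximal γ (fun y => f y * (w y)⁻¹) x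
      ≤ (fracMaximal 0 (fun y => f y ^ (p / s) * w y ^ (-(q / s))) x) ^ (s / q) *
          (∫⁻ y, f y ^ p) ^ (γ / n) :=
  stmt0_general n hn γ p q s hγ hp hpn hq hs w f hw hf x
end
end

section
/- Let $0<\gamma<n$, $1<p<n/\gamma$, $1/q=1/p-\gamma/n$, $r=1+q/p'$, and let $w$ be a weight with $w^q=uv^{1-r}$ for weights $u,v$. Set $z=u^{1/q}v^{1/p}$ and $S(f)=M_\gamma(fv)/v$. Then the strong inequality $\left(\int_{\mathbb{R}^n}M_\gamma f(x)^q w(x)^q dx\right)^{1/q}\le C\left(\int_{\mathbb{R}^n}|f|^p w^p\right)^{1/p}$ for all $f$ holds if and only if $\left(\int_{\mathbb{R}^n}S(f)(x)^q z(x)^q dx\right)^{1/q}\le C'\left(\int_{\mathbb{R}^n}|f|^p z^p\right)^{1/p}$ for all $f$. -/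
/-!
Where `0 < v < ∞`, the substitution `f ↦ f v` is a bijection of measurable functions (up to null
sets, with inverse `f ↦ f / v`), and the factorization `w^q = u v^{1-r}` with
`1 - r = q/p - q` gives pointwise `(M_γ(f v)/v)^q z^q = M_γ(f v)^q w^q` and `f^p z^p = (f v)^p w^p`.
So each inequality for `f` is the other one for `f v`, with the same constant.
-/

open MeasureTheory ENNReal NNReal Filter Topology

noncomputable section

variable {n : ℕ}

lemma fracMaximal_congr_ae {γ : ℝ} {f g : EuclideanSpace ℝ (Fin n) → ℝ≥0∞}
    (hfg : f =ᵐ[volume] g) : fracMaximal γ f = fracMaximal γ g := by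
  funext x
  simp only [fracMaximal, lintegral_congr_ae (ae_restrict_of_ae hfg)]

lemma pos_of_one_div_eq_one_div_sub {n γ p q : ℝ} (hp : 0 < p) (hpn : p < n / γ)
    (hq : 1 / q = 1 / p - γ / n) : 0 < q := by
  have h : γ / n < 1 / p := one_div_div n γ ▸ one_div_lt_one_div_of_lt hp hpn
  exact one_div_pos.mp (hq ▸ sub_pos.mpr h)

section WeightIdentities

variable {p q : ℝ} {u v w : ℝ≥0∞}

lemma div_rpow_mul_eq_of_rpow_eq (hq : 0 ≤ q) (hv₀ : v ≠ 0) (hv : v ≠ ∞)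
    (hw : w ^ q = u * v ^ (q / p - q)) (a : ℝ≥0∞) :
    (a / v) ^ q * (u * v ^ (q / p)) = a ^ q * w ^ q := by
  rw [hw, ENNReal.rpow_sub _ _ hv₀ hv, ENNReal.div_rpow_of_nonneg _ _ hq]
  simp only [div_eq_mul_inv, mul_comm, mul_left_comm, mul_assoc]

lemma mul_rpow_mul_eq_of_rpow_eq (hp : 0 < p) (hq : 0 < q) (hv₀ : v ≠ 0) (hv : v ≠ ∞)
    (hw : w ^ q = u * v ^ (q / p - q)) (b : ℝ≥0∞) :
    (b * v) ^ p * w ^ p = b ^ p * (u ^ (p / q) * v) := by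
  have hwp : w ^ p = u ^ (p / q) * v ^ (1 - p) := by
    have hexp : (q / p - q) * (p / q) = 1 - p := by field_simp
    calc w ^ p = (w ^ q) ^ (p / q) := by rw [← ENNReal.rpow_mul, mul_div_cancel₀ p hq.ne']
      _ = u ^ (p / q) * v ^ (1 - p) := by
        rw [hw, ENNReal.mul_rpow_of_nonneg _ _ (div_pos hp hq).le, ← ENNReal.rpow_mul, hexp]
  have hvv : v ^ p * v ^ (1 - p) = v := by
    rw [← ENNReal.rpow_add _ _ hv₀ hv, add_sub_cancel, ENNReal.rpow_one]
  calc (b * v) ^ p * w ^ p = b ^ p * (u ^ (p / q) * (v ^ p * v ^ (1 - p))) := by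
        rw [hwp, ENNReal.mul_rpow_of_nonneg _ _ hp.le]; ring
    _ = b ^ p * (u ^ (p / q) * v) := by rw [hvv]

end WeightIdentities

section WeightedIntegrals

variable {α : Type*} [MeasurableSpace α] {μ : Measure α} {p q : ℝ} {u v w : α → ℝ≥0∞}

lemma lintegral_div_rpow_mul_eq_of_rpow_eq (hq : 0 ≤ q) (hv : ∀ᵐ x ∂μ, 0 < v x ∧ v x < ∞)
    (hw : ∀ x, w x ^ q = u x * v x ^ (q / p - q)) (F : α → ℝ≥0∞) :
    ∫⁻ x, (F x / v x) ^ q * (u x * v x ^ (q / p)) ∂μ = ∫⁻ x, F x ^ q * w x ^ q ∂μ :=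
  lintegral_congr_ae <| hv.mono fun x hx =>
    div_rpow_mul_eq_of_rpow_eq hq hx.1.ne' hx.2.ne (hw x) (F x)

lemma lintegral_mul_rpow_mul_eq_of_rpow_eq (hp : 0 < p) (hq : 0 < q)
    (hv : ∀ᵐ x ∂μ, 0 < v x ∧ v x < ∞) (hw : ∀ x, w x ^ q = u x * v x ^ (q / p - q))
    (f : α → ℝ≥0∞) :
    ∫⁻ x, (f x * v x) ^ p * w x ^ p ∂μ = ∫⁻ x, f x ^ p * (u x ^ (p / q) * v x) ∂μ :=
  lintegral_congr_ae <| hv.mono fun x hx =>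
    mul_rpow_mul_eq_of_rpow_eq hp hq hx.1.ne' hx.2.ne (hw x) (f x)

lemma mul_inv_mul_ae_eq (hv : ∀ᵐ x ∂μ, 0 < v x ∧ v x < ∞) (f : α → ℝ≥0∞) :
    (fun x => f x * (v x)⁻¹ * v x) =ᵐ[μ] f :=
  hv.mono fun x hx => by
    simp only [mul_assoc, ENNReal.inv_mul_cancel hx.1.ne' hx.2.ne, mul_one]

end WeightedIntegrals

theorem stmt8_general (n : ℕ) (γ p q r : ℝ)
    (hp : 1 < p) (hpn : p < n / γ)
    (hq : 1 / q = 1 / p - γ / n) (hr : r = 1 + q * (p - 1) / p)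
    (u v w : EuclideanSpace ℝ (Fin n) → ℝ≥0∞)
    (hvw : IsWeight v)
    (hfact : ∀ x, w x ^ q = u x * v x ^ (1 - r)) :
    (∃ C : ℝ≥0, 0 < C ∧ ∀ f : EuclideanSpace ℝ (Fin n) → ℝ≥0∞, Measurable f →
        (∫⁻ x, fracMaximal γ f x ^ q * w x ^ q) ^ (1 / q)
          ≤ C * (∫⁻ x, f x ^ p * w x ^ p) ^ (1 / p)) ↔
      (∃ C : ℝ≥0, 0 < C ∧ ∀ f : EuclideanSpace ℝ (Fin n) → ℝ≥0∞, Measurable f →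
        (∫⁻ x, (fracMaximal γ (fun y => f y * v y) x / v x) ^ q * (u x * v x ^ (q / p))) ^ (1 / q)
          ≤ C * (∫⁻ x, f x ^ p * (u x ^ (p / q) * v x)) ^ (1 / p)) := by
  have hp₀ : 0 < p := one_pos.trans hp
  have hq₀ : 0 < q := pos_of_one_div_eq_one_div_sub hp₀ hpn hq
  have hw : ∀ x, w x ^ q = u x * v x ^ (q / p - q) := fun x => by
    rw [hfact x, hr]; congr 2; field_simp; ring
  have hv := hvw.2.1
  simp only [lintegral_div_rpow_mul_eq_of_rpow_eq hq₀.le hv hw,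
    ← lintegral_mul_rpow_mul_eq_of_rpow_eq hp₀ hq₀ hv hw]
  constructor
  · rintro ⟨C, hC, H⟩
    exact ⟨C, hC, fun f hf => H _ (hf.mul hvw.1)⟩
  · rintro ⟨C, hC, H⟩
    refine ⟨C, hC, fun f hf => ?_⟩
    have hfv := mul_inv_mul_ae_eq hv f
    have hrhs : ∫⁻ x, (f x * (v x)⁻¹ * v x) ^ p * w x ^ p = ∫⁻ x, f x ^ p * w x ^ p :=
      lintegral_congr_ae <| hfv.mono fun x hx => by simp only [hx]
    have := H (fun x => f x * (v x)⁻¹) (hf.mul hvw.1.inv)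
    rwa [fracMaximal_congr_ae hfv, hrhs] at this

/-- for `w^q = u v^{1-r}`, `r = 1 + q/p'`, `z = u^{1/q} v^{1/p}`, the weighted
strong `(p,q)` inequality for `M_γ` with weight `w` is equivalent to the strong `(p,q)`
inequality for `S f = M_γ(fv)/v` with weight `z` (note `z^q = u v^{q/p}`, `z^p = u^{p/q} v`). -/
theorem stmt8 (n : ℕ) (hn : 0 < n) (γ p q r : ℝ)
    (hγ : 0 < γ) (hγn : γ < n) (hp : 1 < p) (hpn : p < n / γ)
    (hq : 1 / q = 1 / p - γ / n) (hr : r = 1 + q * (p - 1) / p)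
    (u v w : EuclideanSpace ℝ (Fin n) → ℝ≥0∞)
    (huw : IsWeight u) (hvw : IsWeight v) (hww : IsWeight w)
    (hfact : ∀ x, w x ^ q = u x * v x ^ (1 - r)) :
    (∃ C : ℝ≥0, 0 < C ∧ ∀ f : EuclideanSpace ℝ (Fin n) → ℝ≥0∞, Measurable f →
        (∫⁻ x, fracMaximal γ f x ^ q * w x ^ q) ^ (1 / q)
          ≤ C * (∫⁻ x, f x ^ p * w x ^ p) ^ (1 / p)) ↔
      (∃ C : ℝ≥0, 0 < C ∧ ∀ f : EuclideanSpace ℝ (Fin n) → ℝ≥0∞, Measurable f →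
        (∫⁻ x, (fracMaximal γ (fun y => f y * v y) x / v x) ^ q * (u x * v x ^ (q / p))) ^ (1 / q)
          ≤ C * (∫⁻ x, f x ^ p * (u x ^ (p / q) * v x)) ^ (1 / p)) :=
  stmt8_general n γ p q r hp hpn hq hr u v w hvw hfact
end
end
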